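/- arXiv:1701.04152 — 2 statements merged into one kernel-verified Lean document; each statement's English description precedes it below -/
import Mathlib

section
/- Conditional Gronwall inequality: Let (Ω, 𝓕, P) be a probability space with a filtration (𝓕_t)_{t∈[0,T]}, T > 0. Let Y : [0,T] × Ω → [0,∞) be jointly measurable with Y_t integrable for each t and sup_{t∈[0,T]} E[Y_t] < ∞, let η : Ω → [0,∞) be integrable, let A > 0, and let ρ : [0,∞) → [0,∞) be nondecreasing and concave with ρ(0) = 0 and ρ(x) ≤ A(x+1) for all x ≥ 0. Assume that for every t ∈ [0,T], almost surely Y_t ≤ E[η | 𝓕_t] + E[∫_t^T ρ(Y_s) ds | 𝓕_t]. Then for every t ∈ [0,T], almost surely Y_t ≤ (E[η | 𝓕_t] + A·T)·e^{A(T−t)}. -/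
open MeasureTheory Set

lemma picard_exp_int (A T r : ℝ) (hA : A ≠ 0) :
    ∫ s in r..T, Real.exp (A * (T - s)) = (Real.exp (A * (T - r)) - 1) / A := by
  have h1 : (∫ s in r..T, Real.exp (A * (T - s)))
      = ∫ u in (T - T)..(T - r), Real.exp (A * u) :=
    intervalIntegral.integral_comp_sub_left (fun u => Real.exp (A * u)) T
  rw [h1, sub_self]
  rw [intervalIntegral.integral_comp_mul_left (fun u => Real.exp u) hA]
  rw [integral_exp]
  rw [mul_zero, Real.exp_zero, smul_eq_mul]
  field_simp

lemma picard_pow_int (T r : ℝ) (n : ℕ) :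
    ∫ s in r..T, (T - s) ^ n = (T - r) ^ (n + 1) / (n + 1) := by
  have h1 : (∫ s in r..T, (T - s) ^ n) = ∫ u in (T - T)..(T - r), u ^ n :=
    intervalIntegral.integral_comp_sub_left (fun u => u ^ n) T
  rw [h1, sub_self, integral_pow]
  simp

lemma picard_gronwall {A c D T t : ℝ} (hA : 0 < A) (hc : 0 ≤ c) (hD : 0 ≤ D)
    (ht : t ≤ T) {y : ℝ → ℝ}
    (hy_int : IntervalIntegrable y volume t T)
    (hyD : ∀ s ∈ Set.Icc t T, y s ≤ D)
    (hyφ : ∀ s ∈ Set.Icc t T, y s ≤ c + A * ∫ u in s..T, y u) :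
    (∫ s in t..T, y s) ≤ c / A * (Real.exp (A * (T - t)) - 1) := by
  set φ : ℝ → ℝ := fun r => ∫ s in r..T, y s with hφ
  have hsub : ∀ r ∈ Set.Icc t T, IntervalIntegrable y volume r T := by
    intro r hr
    refine hy_int.mono_set ?_
    rw [Set.uIcc_of_le hr.2, Set.uIcc_of_le ht]
    exact Set.Icc_subset_Icc hr.1 le_rfl
  have claim : ∀ n : ℕ, ∀ r ∈ Set.Icc t T,
      φ r ≤ c / A * (Real.exp (A * (T - r)) - 1)
        + D * (T - t) * ((A * (T - r)) ^ n / n.factorial) := by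
    intro n
    induction n with
    | zero =>
      intro r hr
      have h1 : φ r ≤ D * (T - r) := by
        have := intervalIntegral.integral_mono_on hr.2 (hsub r hr)
          (intervalIntegrable_const (c := D)) (fun x hx => hyD x ⟨hr.1.trans hx.1, hx.2⟩)
        simpa [intervalIntegral.integral_const, smul_eq_mul, mul_comm] using this
      have h2 : 0 ≤ c / A * (Real.exp (A * (T - r)) - 1) := by
        apply mul_nonneg (div_nonneg hc hA.le)
        simp [Real.one_le_exp_iff.2 (mul_nonneg hA.le (sub_nonneg.2 hr.2))]
      have h3 : D * (T - r) ≤ D * (T - t) := by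
        apply mul_le_mul_of_nonneg_left _ hD
        linarith [hr.1]
      simp only [pow_zero, Nat.factorial_zero, Nat.cast_one]
      nlinarith
    | succ n ih =>
      intro r hr
      set g : ℝ → ℝ := fun s => c * Real.exp (A * (T - s))
          + (D * (T - t) * (A ^ (n + 1) / n.factorial)) * (T - s) ^ n with hg
      have hgc : Continuous g := by fun_prop
      have hle : ∀ s ∈ Set.Icc r T, y s ≤ g s := by
        intro s hs
        have hs' : s ∈ Set.Icc t T := ⟨hr.1.trans hs.1, hs.2⟩
        have h1 := hyφ s hs'
        have h2 := ih s hs'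
        have hfac : (0:ℝ) < n.factorial := by positivity
        rw [hg]
        have : c + A * φ s ≤ c + A * (c / A * (Real.exp (A * (T - s)) - 1)
            + D * (T - t) * ((A * (T - s)) ^ n / n.factorial)) := by nlinarith
        calc y s ≤ c + A * φ s := h1
          _ ≤ _ := this
          _ = c * Real.exp (A * (T - s))
              + (D * (T - t) * (A ^ (n + 1) / n.factorial)) * (T - s) ^ n := by
            simp only [mul_pow]
            field_simp
            ring
      have hint : φ r ≤ ∫ s in r..T, g s :=
        intervalIntegral.integral_mono_on hr.2 (hsub r hr) (hgc.intervalIntegrable r T) hle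
      have hgval : (∫ s in r..T, g s) = c / A * (Real.exp (A * (T - r)) - 1)
          + D * (T - t) * ((A * (T - r)) ^ (n + 1) / (n + 1).factorial) := by
        rw [hg]
        rw [intervalIntegral.integral_add
          ((by fun_prop : Continuous fun s : ℝ => c * Real.exp (A * (T - s))).intervalIntegrable r T)
          ((by fun_prop : Continuous fun s : ℝ => (D * (T - t) * (A ^ (n + 1) / (n.factorial : ℝ))) * (T - s) ^ n).intervalIntegrable r T)]
        rw [intervalIntegral.integral_const_mul, intervalIntegral.integral_const_mul]
        rw [picard_exp_int A T r hA.ne', picard_pow_int T r n]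
        have hfac : (0:ℝ) < n.factorial := by positivity
        have : ((n+1).factorial : ℝ) = (n+1) * n.factorial := by
          rw [Nat.factorial_succ]; push_cast; ring
        simp only [mul_pow]
        rw [this]
        field_simp
      rw [hgval] at hint
      exact hint
  -- pass to the limit
  have hx : Filter.Tendsto (fun n : ℕ => D * (T - t) * ((A * (T - t)) ^ n / n.factorial))
      Filter.atTop (nhds 0) := by
    have := FloorSemiring.tendsto_pow_div_factorial_atTop (A * (T - t))
    simpa using this.const_mul (D * (T - t))
  have hbound : ∀ n : ℕ, φ t - c / A * (Real.exp (A * (T - t)) - 1)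
      ≤ D * (T - t) * ((A * (T - t)) ^ n / n.factorial) := by
    intro n
    have := claim n t ⟨le_rfl, ht⟩
    linarith
  have := ge_of_tendsto hx (Filter.Eventually.of_forall hbound)
  linarith

/-- Conditional Gronwall inequality: the step from (18) to (19) in the proof
of Proposition 5 of the paper. -/
theorem stmt_8 {Ω : Type*} {m0 : MeasurableSpace Ω} (μ : Measure Ω)
    [IsProbabilityMeasure μ]
    (T : ℝ) (hT : 0 < T) (ℱ : Filtration ℝ m0)
    (Y : ℝ → Ω → ℝ) (hYmeas : Measurable (Function.uncurry Y))
    (hYnn : ∀ t ∈ Set.Icc (0 : ℝ) T, ∀ ω, 0 ≤ Y t ω)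
    (hYint : ∀ t ∈ Set.Icc (0 : ℝ) T, Integrable (Y t) μ)
    (hYsup : ∃ C : ℝ, ∀ t ∈ Set.Icc (0 : ℝ) T, ∫ ω, Y t ω ∂μ ≤ C)
    (η : Ω → ℝ) (hηint : Integrable η μ) (hηnn : ∀ ω, 0 ≤ η ω)
    (A : ℝ) (hA : 0 < A)
    (ρ : ℝ → ℝ) (hρm : MonotoneOn ρ (Set.Ici 0))
    (hρconc : ConcaveOn ℝ (Set.Ici 0) ρ) (hρ0 : ρ 0 = 0)
    (hρnn : ∀ x : ℝ, 0 ≤ x → 0 ≤ ρ x)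
    (hρgrowth : ∀ x : ℝ, 0 ≤ x → ρ x ≤ A * (x + 1))
    (hineq : ∀ t ∈ Set.Icc (0 : ℝ) T, ∀ᵐ ω ∂μ,
      Y t ω ≤ (μ[η|ℱ t]) ω + (μ[fun ω' => ∫ s in t..T, ρ (Y s ω')|ℱ t]) ω) :
    ∀ t ∈ Set.Icc (0 : ℝ) T, ∀ᵐ ω ∂μ,
      Y t ω ≤ ((μ[η|ℱ t]) ω + A * T) * Real.exp (A * (T - t)) := by
  obtain ⟨C₀, hC₀⟩ := hYsup
  set C : ℝ := max C₀ 0 with hCdef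
  have hC : ∀ s ∈ Set.Icc (0:ℝ) T, ∫ ω, Y s ω ∂μ ≤ C :=
    fun s hs => (hC₀ s hs).trans (le_max_left _ _)
  have hCnn : (0:ℝ) ≤ C := le_max_right _ _
  set ρt : ℝ → ℝ := fun x => ρ (max x 0) with hρtdef
  have hρt_mono : Monotone ρt :=
    fun a b hab => hρm (le_max_right a 0) (le_max_right b 0) (max_le_max hab le_rfl)
  have hρt_eq : ∀ x, 0 ≤ x → ρt x = ρ x := by
    intro x hx; rw [hρtdef]; simp [max_eq_left hx]
  have hρt_nn : ∀ x, 0 ≤ ρt x := fun x => hρnn _ (le_max_right x 0)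
  have hρt_growth : ∀ x, 0 ≤ x → ρt x ≤ A * (x + 1) :=
    fun x hx => (hρt_eq x hx) ▸ hρgrowth x hx
  -- product integrability of Y and ρt ∘ Y
  have heq0 : ((volume : Measure ℝ).prod μ).restrict (Set.Ioc 0 T ×ˢ (Set.univ : Set Ω))
      = ((volume : Measure ℝ).restrict (Set.Ioc 0 T)).prod μ := by
    rw [← Measure.prod_restrict, Measure.restrict_univ]
  have hYmeas' : Measurable (fun p : ℝ × Ω => Y p.1 p.2) := hYmeas
  have hYprod : Integrable (fun p : ℝ × Ω => Y p.1 p.2)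
      (((volume : Measure ℝ).restrict (Set.Ioc 0 T)).prod μ) := by
    rw [integrable_prod_iff hYmeas'.aestronglyMeasurable]
    constructor
    · refine (ae_restrict_mem measurableSet_Ioc).mono fun s hs => ?_
      exact hYint s ⟨hs.1.le, hs.2⟩
    · refine Integrable.mono' (integrable_const C)
        (hYmeas'.norm.stronglyMeasurable.integral_prod_right').aestronglyMeasurable ?_
      refine (ae_restrict_mem measurableSet_Ioc).mono fun s hs => ?_
      have hs' : s ∈ Set.Icc (0:ℝ) T := ⟨hs.1.le, hs.2⟩
      have h1 : (fun ω => ‖Y s ω‖) = fun ω => Y s ω := by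
        funext ω; exact Real.norm_of_nonneg (hYnn s hs' ω)
      rw [Real.norm_eq_abs, abs_of_nonneg (integral_nonneg fun ω => norm_nonneg _)]
      calc (∫ ω, ‖Y s ω‖ ∂μ) = ∫ ω, Y s ω ∂μ := by rw [h1]
        _ ≤ C := hC s hs'
  have hρprod : Integrable (fun p : ℝ × Ω => ρt (Y p.1 p.2))
      (((volume : Measure ℝ).restrict (Set.Ioc 0 T)).prod μ) := by
    refine Integrable.mono' ((hYprod.add (integrable_const 1)).const_mul A)
      ((hρt_mono.measurable.comp hYmeas').aestronglyMeasurable) ?_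
    rw [← heq0]
    refine (ae_restrict_mem ((measurableSet_Ioc).prod MeasurableSet.univ)).mono fun p hp => ?_
    have hp1 : p.1 ∈ Set.Icc (0:ℝ) T := ⟨hp.1.1.le, hp.1.2⟩
    have hnn : 0 ≤ Y p.1 p.2 := hYnn p.1 hp1 p.2
    rw [Real.norm_eq_abs, abs_of_nonneg (hρt_nn _)]
    exact hρt_growth _ hnn
  -- restriction to subrectangles
  have hYint' : ∀ r, 0 ≤ r → ∀ S : Set Ω, Integrable (fun p : ℝ × Ω => Y p.1 p.2)
      (((volume : Measure ℝ).restrict (Set.Ioc r T)).prod (μ.restrict S)) := by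
    intro r hr S
    rw [Measure.prod_restrict]
    have h0 : IntegrableOn (fun p : ℝ × Ω => Y p.1 p.2)
        (Set.Ioc 0 T ×ˢ (Set.univ : Set Ω)) ((volume : Measure ℝ).prod μ) := by
      rw [IntegrableOn, heq0]; exact hYprod
    exact h0.mono_set (Set.prod_mono (Set.Ioc_subset_Ioc hr le_rfl) (Set.subset_univ S))
  have hρint' : ∀ r, 0 ≤ r → ∀ S : Set Ω, Integrable (fun p : ℝ × Ω => ρt (Y p.1 p.2))
      (((volume : Measure ℝ).restrict (Set.Ioc r T)).prod (μ.restrict S)) := by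
    intro r hr S
    rw [Measure.prod_restrict]
    have h0 : IntegrableOn (fun p : ℝ × Ω => ρt (Y p.1 p.2))
        (Set.Ioc 0 T ×ˢ (Set.univ : Set Ω)) ((volume : Measure ℝ).prod μ) := by
      rw [IntegrableOn, heq0]; exact hρprod
    exact h0.mono_set (Set.prod_mono (Set.Ioc_subset_Ioc hr le_rfl) (Set.subset_univ S))
  -- time integrals
  set Ifun : ℝ → Ω → ℝ := fun r ω => ∫ s in Set.Ioc r T, Y s ω with hIdef
  set Zfun : ℝ → Ω → ℝ := fun r ω => ∫ s in Set.Ioc r T, ρt (Y s ω) with hZdef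
  have hIint : ∀ r, 0 ≤ r → Integrable (Ifun r) μ := by
    intro r hr
    have h := hYint' r hr Set.univ
    rw [Measure.restrict_univ] at h
    exact h.integral_prod_right
  have hZint : ∀ r, 0 ≤ r → Integrable (Zfun r) μ := by
    intro r hr
    have h := hρint' r hr Set.univ
    rw [Measure.restrict_univ] at h
    exact h.integral_prod_right
  have hZeq : ∀ r ∈ Set.Icc (0:ℝ) T, (fun ω => ∫ s in r..T, ρ (Y s ω)) = Zfun r := by
    intro r hr; funext ω
    rw [intervalIntegral.integral_of_le hr.2]
    exact setIntegral_congr_fun measurableSet_Ioc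
      (fun s hs => (hρt_eq _ (hYnn s ⟨hr.1.trans hs.1.le, hs.2⟩ ω)).symm)
  have hZle : ∀ r ∈ Set.Icc (0:ℝ) T, ∀ᵐ ω ∂μ, Zfun r ω ≤ A * (T - r) + A * Ifun r ω := by
    intro r hr
    have h1 : ∀ᵐ ω ∂μ, Integrable (fun s => Y s ω)
        ((volume : Measure ℝ).restrict (Set.Ioc r T)) := by
      have h := hYint' r hr.1 Set.univ
      rw [Measure.restrict_univ] at h
      exact h.prod_left_ae
    have h2 : ∀ᵐ ω ∂μ, Integrable (fun s => ρt (Y s ω))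
        ((volume : Measure ℝ).restrict (Set.Ioc r T)) := by
      have h := hρint' r hr.1 Set.univ
      rw [Measure.restrict_univ] at h
      exact h.prod_left_ae
    filter_upwards [h1, h2] with ω hω1 hω2
    have hle : ∀ s ∈ Set.Ioc r T, ρt (Y s ω) ≤ A * (Y s ω + 1) :=
      fun s hs => hρt_growth _ (hYnn s ⟨hr.1.trans hs.1.le, hs.2⟩ ω)
    have step : Zfun r ω ≤ ∫ s in Set.Ioc r T, A * (Y s ω + 1) :=
      setIntegral_mono_on hω2 ((hω1.add (integrable_const 1)).const_mul A)
        measurableSet_Ioc hle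
    have hvol : (∫ s in Set.Ioc r T, (1:ℝ)) = T - r := by
      rw [setIntegral_const, smul_eq_mul, mul_one, Real.volume_real_Ioc_of_le hr.2]
    calc Zfun r ω ≤ ∫ s in Set.Ioc r T, A * (Y s ω + 1) := step
      _ = A * ((∫ s in Set.Ioc r T, Y s ω) + ∫ s in Set.Ioc r T, (1:ℝ)) := by
        rw [integral_const_mul, integral_add hω1 (integrable_const 1)]
      _ = A * (T - r) + A * Ifun r ω := by rw [hvol]; ring
  -- Fubini
  have hfub : ∀ r ∈ Set.Icc (0:ℝ) T, ∀ S : Set Ω,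
      ∫ ω in S, Ifun r ω ∂μ = ∫ s in Set.Ioc r T, ∫ ω in S, Y s ω ∂μ := by
    intro r hr S
    exact (integral_integral_swap (hYint' r hr.1 S)).symm
  -- main part
  intro t ht
  have hm : ℱ t ≤ m0 := ℱ.le t
  set k : ℝ := (Real.exp (A * (T - t)) - 1) / A with hkdef
  set R : Ω → ℝ := fun ω => k * ((μ[η|ℱ t]) ω + A * T) with hRdef
  have hRsm : StronglyMeasurable[ℱ t] R := by
    refine StronglyMeasurable.const_mul ?_ k
    exact stronglyMeasurable_condExp.add stronglyMeasurable_const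
  have hRint : Integrable R μ := (integrable_condExp.add (integrable_const _)).const_mul k
  -- set integral inequality on ℱ t sets
  have hkey : ∀ S : Set Ω, MeasurableSet[ℱ t] S →
      ∫ ω in S, (μ[Ifun t|ℱ t]) ω ∂μ ≤ ∫ ω in S, R ω ∂μ := by
    intro S hS
    have hS0 : MeasurableSet S := hm S hS
    set y : ℝ → ℝ := fun s => ∫ ω in S, Y s ω ∂μ with hy
    have hy_sm : StronglyMeasurable y :=
      hYmeas'.stronglyMeasurable.integral_prod_right' (ν := μ.restrict S)
    have hynn : ∀ s ∈ Set.Icc (0:ℝ) T, 0 ≤ y s :=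
      fun s hs => integral_nonneg fun ω => hYnn s hs ω
    have hyC : ∀ s ∈ Set.Icc (0:ℝ) T, y s ≤ C := by
      intro s hs
      calc y s ≤ ∫ ω, Y s ω ∂μ :=
            setIntegral_le_integral (hYint s hs) (Filter.Eventually.of_forall (hYnn s hs))
        _ ≤ C := hC s hs
    have hy_ii : IntervalIntegrable y volume t T := by
      rw [intervalIntegrable_iff_integrableOn_Ioc_of_le ht.2]
      refine Integrable.mono' (integrable_const C) hy_sm.aestronglyMeasurable ?_
      refine (ae_restrict_mem measurableSet_Ioc).mono fun s hs => ?_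
      have hs' : s ∈ Set.Icc (0:ℝ) T := ⟨ht.1.trans hs.1.le, hs.2⟩
      rw [Real.norm_eq_abs, abs_of_nonneg (hynn s hs')]
      exact hyC s hs'
    have hφeq : ∀ r ∈ Set.Icc (0:ℝ) T, (∫ s in r..T, y s) = ∫ ω in S, Ifun r ω ∂μ := by
      intro r hr
      rw [intervalIntegral.integral_of_le hr.2, hfub r hr S]
    set c : ℝ := (∫ ω in S, η ω ∂μ) + A * T * (μ S).toReal with hcdef
    have hcnn : 0 ≤ c := by
      have h1 : 0 ≤ ∫ ω in S, η ω ∂μ := integral_nonneg fun ω => hηnn ω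
      have h2 : (0:ℝ) ≤ A * T * (μ S).toReal := by positivity
      linarith
    have hyφ : ∀ s ∈ Set.Icc t T, y s ≤ c + A * ∫ u in s..T, y u := by
      intro s hs
      have hs0 : s ∈ Set.Icc (0:ℝ) T := ⟨ht.1.trans hs.1, hs.2⟩
      have hSs : MeasurableSet[ℱ s] S := (ℱ.mono hs.1) S hS
      have h1 := hineq s hs0
      rw [hZeq s hs0] at h1
      have hle1 : y s ≤ ∫ ω in S, ((μ[η|ℱ s]) ω + (μ[Zfun s|ℱ s]) ω) ∂μ :=
        setIntegral_mono_ae (hYint s hs0).integrableOn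
          (integrable_condExp.add integrable_condExp).integrableOn h1
      have hsplit : (∫ ω in S, ((μ[η|ℱ s]) ω + (μ[Zfun s|ℱ s]) ω) ∂μ)
          = (∫ ω in S, (μ[η|ℱ s]) ω ∂μ) + ∫ ω in S, (μ[Zfun s|ℱ s]) ω ∂μ :=
        integral_add integrable_condExp.integrableOn integrable_condExp.integrableOn
      have hη' : (∫ ω in S, (μ[η|ℱ s]) ω ∂μ) = ∫ ω in S, η ω ∂μ :=
        setIntegral_condExp (ℱ.le s) hηint hSs
      have hZ' : (∫ ω in S, (μ[Zfun s|ℱ s]) ω ∂μ) = ∫ ω in S, Zfun s ω ∂μ :=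
        setIntegral_condExp (ℱ.le s) (hZint s hs0.1) hSs
      have hZb : (∫ ω in S, Zfun s ω ∂μ) ≤ ∫ ω in S, (A * (T - s) + A * Ifun s ω) ∂μ :=
        setIntegral_mono_ae (hZint s hs0.1).integrableOn
          ((integrable_const _).add ((hIint s hs0.1).const_mul A)).integrableOn (hZle s hs0)
      have hterm : (∫ ω in S, (A * (T - s) + A * Ifun s ω) ∂μ)
          = A * (T - s) * (μ S).toReal + A * ∫ ω in S, Ifun s ω ∂μ := by
        rw [integral_add (integrable_const _).integrableOn
          ((hIint s hs0.1).const_mul A).integrableOn, setIntegral_const, measureReal_def, integral_const_mul,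
          smul_eq_mul]
        ring
      have hIφ : (∫ ω in S, Ifun s ω ∂μ) = ∫ u in s..T, y u := (hφeq s hs0).symm
      have hmono : A * (T - s) * (μ S).toReal ≤ A * T * (μ S).toReal := by
        have h1 : T - s ≤ T := by linarith [hs0.1]
        have h2 := mul_le_mul_of_nonneg_left h1 hA.le
        exact mul_le_mul_of_nonneg_right h2 ENNReal.toReal_nonneg
      rw [hsplit, hη', hZ'] at hle1
      rw [hterm, hIφ] at hZb
      calc y s ≤ (∫ ω in S, η ω ∂μ) + ∫ ω in S, Zfun s ω ∂μ := hle1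
        _ ≤ (∫ ω in S, η ω ∂μ) + (A * (T - s) * (μ S).toReal + A * ∫ u in s..T, y u) := by
          linarith
        _ ≤ c + A * ∫ u in s..T, y u := by rw [hcdef]; linarith
    have hyD : ∀ s ∈ Set.Icc t T, y s ≤ C :=
      fun s hs => hyC s ⟨ht.1.trans hs.1, hs.2⟩
    have hpic := picard_gronwall hA hcnn hCnn ht.2 hy_ii hyD hyφ
    rw [setIntegral_condExp hm (hIint t ht.1) hS]
    rw [← hφeq t ht]
    have hR : (∫ ω in S, R ω ∂μ) = k * c := by
      rw [hRdef]
      rw [integral_const_mul, integral_add integrable_condExp.integrableOn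
        (integrable_const _).integrableOn, setIntegral_const, measureReal_def,
        setIntegral_condExp hm hηint hS]
      rw [smul_eq_mul, hcdef]
      ring
    rw [hR]
    calc (∫ s in t..T, y s) ≤ c / A * (Real.exp (A * (T - t)) - 1) := hpic
      _ = k * c := by rw [hkdef]; ring
  -- from set integrals to a.e. inequality via trim
  have hWR : (μ[Ifun t|ℱ t]) ≤ᵐ[μ] R := by
    have hWsm : StronglyMeasurable[ℱ t] (μ[Ifun t|ℱ t]) := stronglyMeasurable_condExp
    have h1 : Integrable (μ[Ifun t|ℱ t]) (μ.trim hm) := integrable_condExp.trim hm hWsm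
    have h2 : Integrable R (μ.trim hm) := hRint.trim hm hRsm
    have h3 : (μ[Ifun t|ℱ t]) ≤ᵐ[μ.trim hm] R := by
      refine ae_le_of_forall_setIntegral_le h1 h2 fun S hS _ => ?_
      rw [← setIntegral_trim hm hWsm hS, ← setIntegral_trim hm hRsm hS]
      exact hkey S hS
    exact ae_le_of_ae_le_trim h3
  -- conditional expectation chain
  have h0 := hineq t ht
  rw [hZeq t ht] at h0
  have hc1 : μ[Zfun t|ℱ t] ≤ᵐ[μ] μ[fun ω => A * (T - t) + A * Ifun t ω|ℱ t] :=
    condExp_mono (hZint t ht.1)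
      ((integrable_const _).add ((hIint t ht.1).const_mul A)) (hZle t ht)
  have hc2 : μ[fun ω => A * (T - t) + A * Ifun t ω|ℱ t]
      =ᵐ[μ] fun ω => A * (T - t) + A * (μ[Ifun t|ℱ t]) ω := by
    have hfeq : (fun ω => A * (T - t) + A * Ifun t ω)
        = (fun _ => A * (T - t)) + (A • Ifun t) := by
      funext ω; simp [Pi.add_apply, Pi.smul_apply, smul_eq_mul]
    rw [hfeq]
    refine (condExp_add (integrable_const _) ((hIint t ht.1).smul A) (ℱ t)).trans ?_
    have h4 : μ[fun _ : Ω => A * (T - t)|ℱ t] = fun _ => A * (T - t) := condExp_const hm _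
    have h5 : μ[A • Ifun t|ℱ t] =ᵐ[μ] A • μ[Ifun t|ℱ t] := condExp_smul A (Ifun t) (ℱ t)
    filter_upwards [h5] with ω h5ω
    simp [Pi.add_apply, h4, h5ω, Pi.smul_apply, smul_eq_mul]
  filter_upwards [h0, hc1, hc2, hWR] with ω h0ω hc1ω hc2ω hWω
  set M := (μ[η|ℱ t]) ω
  set e := Real.exp (A * (T - t)) with hedef
  have hk : A * k = e - 1 := by
    rw [hkdef, hedef]; field_simp
  have s1 : Y t ω ≤ M + (A * (T - t) + A * (μ[Ifun t|ℱ t]) ω) := by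
    have := hc1ω.trans (le_of_eq hc2ω)
    linarith [h0ω]
  have s2 : A * (μ[Ifun t|ℱ t]) ω ≤ A * (k * (M + A * T)) :=
    mul_le_mul_of_nonneg_left hWω hA.le
  have s3 : A * (k * (M + A * T)) = (e - 1) * (M + A * T) := by
    rw [← hk]; ring
  have expand : (M + A * T) * e = M + A * (T - t) + (e - 1) * (M + A * T) + A * t := by
    ring
  have hAt : 0 ≤ A * t := mul_nonneg hA.le ht.1
  linarith
end

section
/- Coupled Bihari iteration: Let T₁ < T be real numbers and let κ : [0,∞) → [0,∞) be continuous and nondecreasing with κ(0) = 0, κ(u) > 0 for u > 0, and ∫_{(0,ε]} (1/κ(u)) du = +∞ for every ε > 0. For each integer n ≥ 1 let x_n, y_n : [T₁,T] → [0,∞) be Borel measurable nonincreasing functions with sup_{n≥1} sup_{t∈[T₁,T]} (x_n(t) + y_n(t)) < ∞, and suppose that for every n ≥ 2 and every t ∈ [T₁,T]: x_n(t) + y_n(t) ≤ 2·∫_t^T κ(x_n(s)) ds + (1/8)·y_{n−1}(t). Then lim_{n→∞} sup_{t∈[T₁,T]} (x_n(t) + y_n(t)) = 0. -/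
open MeasureTheory Filter intervalIntegral


lemma divergence_aux (κ : ℝ → ℝ) (hκc : Continuous κ)
    (hκpos : ∀ u : ℝ, 0 < u → 0 < κ u)
    (M K : ℝ) (hM : 0 < M)
    (hdivM : ∫⁻ u in Set.Ioc (0 : ℝ) M, ENNReal.ofReal (1 / κ u) = ⊤)
    (hb : ∀ δ : ℝ, 0 < δ → δ < M → (∫ u in δ..M, 1 / κ u) ≤ K) : False := by
  set g : ℝ → ENNReal := fun u => ENNReal.ofReal (1 / κ u) with hg
  have hgm : Measurable g := by
    apply Measurable.ennreal_ofReal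
    exact (measurable_const.div hκc.measurable)
  set δ : ℕ → ℝ := fun k => M / (k + 2) with hδ
  have hδpos : ∀ k, 0 < δ k := fun k => div_pos hM (by positivity)
  have hδlt : ∀ k, δ k < M := by
    intro k
    rw [hδ, div_lt_iff₀ (by positivity)]
    nlinarith [hM]
  set f : ℕ → ℝ → ENNReal := fun k => (Set.Ioc (δ k) M).indicator g with hf
  have hfm : ∀ k, Measurable (f k) := fun k => hgm.indicator measurableSet_Ioc
  have hfmono : Monotone f := by
    intro k l hkl
    apply Set.indicator_le_indicator_of_subset
    · apply Set.Ioc_subset_Ioc_left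
      apply div_le_div_of_nonneg_left hM.le (by positivity)
      have : (k:ℝ) ≤ l := Nat.cast_le.2 hkl
      linarith
    · intro u; exact zero_le
  have hsup : ∀ u : ℝ, (⨆ k, f k u) = (Set.Ioc (0:ℝ) M).indicator g u := by
    intro u
    by_cases hu : u ∈ Set.Ioc (0:ℝ) M
    · rw [Set.indicator_of_mem hu]
      apply le_antisymm
      · apply iSup_le; intro k
        by_cases h : u ∈ Set.Ioc (δ k) M
        · rw [hf]; simp only [Set.indicator_of_mem h]; exact le_rfl
        · rw [hf]; simp only [Set.indicator_of_notMem h]; exact zero_le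
      · obtain ⟨k, hk⟩ : ∃ k : ℕ, δ k < u := by
          obtain ⟨k, hk⟩ := exists_nat_gt (M / u)
          refine ⟨k, ?_⟩
          rw [hδ, div_lt_iff₀ (by positivity)]
          have : M / u < k + 2 := by linarith
          rw [div_lt_iff₀ hu.1] at this
          linarith
        have : u ∈ Set.Ioc (δ k) M := ⟨hk, hu.2⟩
        calc g u = f k u := by rw [hf]; simp [Set.indicator_of_mem this]
        _ ≤ ⨆ k, f k u := le_iSup (fun k => f k u) k
    · rw [Set.indicator_of_notMem hu]
      apply le_antisymm _ (zero_le)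
      apply iSup_le; intro k
      have : u ∉ Set.Ioc (δ k) M := by
        intro h; exact hu ⟨lt_trans (hδpos k) h.1, h.2⟩
      rw [hf]; simp [Set.indicator_of_notMem this]
  have hint : ∀ k, ∫⁻ u, f k u ≤ ENNReal.ofReal K := by
    intro k
    rw [hf]
    simp only [lintegral_indicator measurableSet_Ioc _]
    have hcont : ContinuousOn (fun u => 1 / κ u) (Set.Icc (δ k) M) := by
      apply ContinuousOn.div continuousOn_const hκc.continuousOn
      intro u hu; exact (hκpos u (lt_of_lt_of_le (hδpos k) hu.1)).ne'
    have hintg : IntegrableOn (fun u => 1 / κ u) (Set.Ioc (δ k) M) volume :=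
      (hcont.integrableOn_Icc).mono_set Set.Ioc_subset_Icc_self
    have hnn : 0 ≤ᵐ[volume.restrict (Set.Ioc (δ k) M)] fun u => 1 / κ u := by
      filter_upwards [ae_restrict_mem measurableSet_Ioc] with u hu
      exact le_of_lt (div_pos one_pos (hκpos u (lt_trans (hδpos k) hu.1)))
    rw [← ofReal_integral_eq_lintegral_ofReal hintg hnn]
    apply ENNReal.ofReal_le_ofReal
    rw [← intervalIntegral.integral_of_le (hδlt k).le]
    exact hb _ (hδpos k) (hδlt k)
  have key := lintegral_iSup (μ := volume) hfm hfmono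
  have heq : (∫⁻ u, ⨆ k, f k u) = ∫⁻ u, (Set.Ioc (0:ℝ) M).indicator g u :=
    lintegral_congr hsup
  have htop : (∫⁻ u, (Set.Ioc (0:ℝ) M).indicator g u) = ⊤ := by
    rw [lintegral_indicator measurableSet_Ioc]; exact hdivM
  have : (⊤ : ENNReal) ≤ ENNReal.ofReal K := by
    rw [← htop, ← heq, key]
    exact iSup_le hint
  exact absurd (lt_of_le_of_lt this ENNReal.ofReal_lt_top) (lt_irrefl _)


lemma osgood (T₁ T : ℝ) (hT : T₁ < T)
    (κ : ℝ → ℝ) (hκc : Continuous κ) (hκm : Monotone κ) (hκ0 : κ 0 = 0)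
    (hκpos : ∀ u : ℝ, 0 < u → 0 < κ u)
    (hdiv : ∀ ε : ℝ, 0 < ε →
      ∫⁻ u in Set.Ioc (0 : ℝ) ε, ENNReal.ofReal (1 / κ u) = ⊤)
    (C : ℝ) (X : ℝ → ℝ) (hXm : Measurable X)
    (hXnn : ∀ t ∈ Set.Icc T₁ T, 0 ≤ X t)
    (hXC : ∀ t ∈ Set.Icc T₁ T, X t ≤ C)
    (hX : ∀ t ∈ Set.Icc T₁ T, X t ≤ 3 * ∫ s in t..T, κ (X s)) :
    ∀ t ∈ Set.Icc T₁ T, X t = 0 := by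
  have hTmem : T ∈ Set.Icc T₁ T := ⟨hT.le, le_rfl⟩
  have hT₁mem : T₁ ∈ Set.Icc T₁ T := ⟨le_rfl, hT.le⟩
  -- integrability of κ ∘ X on Icc T₁ T
  have hXint : IntegrableOn (fun s => κ (X s)) (Set.Icc T₁ T) volume := by
    apply Measure.integrableOn_of_bounded (M := κ C) (by simp)
      (hκc.measurable.comp hXm).aestronglyMeasurable
    filter_upwards [ae_restrict_mem measurableSet_Icc] with s hs
    rw [Real.norm_eq_abs, abs_of_nonneg (by rw [← hκ0]; exact hκm (hXnn s hs))]
    exact hκm (hXC s hs)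
  have hXii : ∀ t ∈ Set.Icc T₁ T, IntervalIntegrable (fun s => κ (X s)) volume t T := by
    intro t ht
    rw [intervalIntegrable_iff_integrableOn_Ioc_of_le ht.2]
    exact hXint.mono_set (Set.Ioc_subset_Icc_self.trans (Set.Icc_subset_Icc_left ht.1))
  set W : ℝ → ℝ := fun t => 3 * ∫ s in t..T, κ (X s) with hW
  have hκXnn : ∀ s ∈ Set.Icc T₁ T, 0 ≤ κ (X s) := by
    intro s hs; rw [← hκ0]; exact hκm (hXnn s hs)
  have hWnn : ∀ t ∈ Set.Icc T₁ T, 0 ≤ W t := by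
    intro t ht
    apply mul_nonneg (by norm_num)
    rw [integral_of_le ht.2]
    apply setIntegral_nonneg measurableSet_Ioc
    intro s hs; exact hκXnn s ⟨le_trans ht.1 hs.1.le, hs.2⟩
  have hXW : ∀ t ∈ Set.Icc T₁ T, X t ≤ W t := hX
  have hWanti : AntitoneOn W (Set.Icc T₁ T) := by
    intro a ha b hb hab
    rw [hW]
    simp only
    have hsplit : (∫ s in a..b, κ (X s)) + (∫ s in b..T, κ (X s)) = ∫ s in a..T, κ (X s) := by
      apply integral_add_adjacent_intervals
      · rw [intervalIntegrable_iff_integrableOn_Ioc_of_le hab]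
        exact hXint.mono_set (Set.Ioc_subset_Icc_self.trans (Set.Icc_subset_Icc ha.1 hb.2))
      · exact hXii b hb
    have h1 : 0 ≤ ∫ s in a..b, κ (X s) := by
      rw [integral_of_le hab]
      apply setIntegral_nonneg measurableSet_Ioc
      intro s hs; exact hκXnn s ⟨le_trans ha.1 hs.1.le, le_trans hs.2 hb.2⟩
    nlinarith [hsplit]
  have hWcont : ContinuousOn W (Set.Icc T₁ T) := by
    have : Set.Icc T₁ T = Set.uIcc T₁ T := (Set.uIcc_of_le hT.le).symm
    rw [this]
    apply ContinuousOn.mul continuousOn_const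
    apply continuousOn_primitive_interval_left
    rw [← this]; exact hXint
  -- V
  set V : ℝ → ℝ := fun t => 3 * ∫ s in t..T, κ (W s) with hV
  have hκWcont : ContinuousOn (fun s => κ (W s)) (Set.Icc T₁ T) :=
    hκc.comp_continuousOn hWcont
  have hWii : ∀ t ∈ Set.Icc T₁ T, IntervalIntegrable (fun s => κ (W s)) volume t T := by
    intro t ht
    apply ContinuousOn.intervalIntegrable
    rw [Set.uIcc_of_le ht.2]
    exact hκWcont.mono (Set.Icc_subset_Icc_left ht.1)
  have hWV : ∀ t ∈ Set.Icc T₁ T, W t ≤ V t := by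
    intro t ht
    rw [hW, hV]
    simp only
    have : (∫ s in t..T, κ (X s)) ≤ ∫ s in t..T, κ (W s) := by
      apply integral_mono_on ht.2 (hXii t ht) (hWii t ht)
      intro s hs
      exact hκm (hXW s ⟨le_trans ht.1 hs.1, hs.2⟩)
    linarith
  have hVnn : ∀ t ∈ Set.Icc T₁ T, 0 ≤ V t :=
    fun t ht => le_trans (hWnn t ht) (hWV t ht)
  have hκWnn : ∀ s ∈ Set.Icc T₁ T, 0 ≤ κ (W s) := by
    intro s hs; rw [← hκ0]; exact hκm (hWnn s hs)
  have hVanti : AntitoneOn V (Set.Icc T₁ T) := by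
    intro a ha b hb hab
    rw [hV]; simp only
    have hsplit : (∫ s in a..b, κ (W s)) + (∫ s in b..T, κ (W s)) = ∫ s in a..T, κ (W s) := by
      apply integral_add_adjacent_intervals _ (hWii b hb)
      apply ContinuousOn.intervalIntegrable
      rw [Set.uIcc_of_le hab]
      exact hκWcont.mono (Set.Icc_subset_Icc ha.1 hb.2)
    have h1 : 0 ≤ ∫ s in a..b, κ (W s) := by
      rw [integral_of_le hab]
      apply setIntegral_nonneg measurableSet_Ioc
      intro s hs; exact hκWnn s ⟨le_trans ha.1 hs.1.le, le_trans hs.2 hb.2⟩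
    nlinarith [hsplit]
  have hVcont : ContinuousOn V (Set.Icc T₁ T) := by
    have huicc : Set.Icc T₁ T = Set.uIcc T₁ T := (Set.uIcc_of_le hT.le).symm
    rw [huicc]
    apply ContinuousOn.mul continuousOn_const
    apply continuousOn_primitive_interval_left
    rw [← huicc]
    exact hκWcont.integrableOn_Icc
  have hVT : V T = 0 := by rw [hV]; simp
  have hVderiv : ∀ t ∈ Set.Ioo T₁ T, HasDerivAt V (-(3 * κ (W t))) t := by
    intro t ht
    have htmem : t ∈ Set.Icc T₁ T := Set.Ioo_subset_Icc_self ht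
    have hnhds : Set.Icc T₁ T ∈ nhds t := Icc_mem_nhds ht.1 ht.2
    have hca : ContinuousAt (fun s => κ (W s)) t := hκWcont.continuousAt hnhds
    have hd : HasDerivAt (fun u => ∫ s in u..T, κ (W s)) (-(κ (W t))) t := by
      apply integral_hasDerivAt_left (hWii t htmem)
      · exact ⟨Set.Icc T₁ T, hnhds, (hκWcont.mono Set.Subset.rfl).aestronglyMeasurable measurableSet_Icc⟩
      · exact hca
    have := hd.const_mul 3
    simpa [mul_comm, mul_assoc, hV] using this
  -- Main claim: V T₁ = 0
  have hVT₁ : V T₁ = 0 := by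
    by_contra h
    have hM : 0 < V T₁ := lt_of_le_of_ne (hVnn T₁ hT₁mem) (Ne.symm h)
    set M := V T₁ with hMdef
    apply divergence_aux κ hκc hκpos M (3 * (T - T₁)) hM (hdiv M hM)
    intro δ hδ0 hδM
    -- find c with V c = δ
    have hIVT : δ ∈ V '' Set.Icc T₁ T := by
      apply intermediate_value_Icc' hT.le hVcont
      rw [hVT]
      exact ⟨hδ0.le, hδM.le⟩
    obtain ⟨c, hc, hVc⟩ := hIVT
    have hcT₁ : T₁ < c := by
      refine lt_of_le_of_ne hc.1 (fun h1 => ?_)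
      rw [← h1] at hVc
      rw [hMdef, hVc] at hδM
      exact lt_irrefl _ hδM
    have hVge : ∀ t ∈ Set.Icc T₁ c, δ ≤ V t := by
      intro t ht
      rw [← hVc]
      exact hVanti ⟨ht.1, le_trans ht.2 hc.2⟩ hc ht.2
    have hVle : ∀ t ∈ Set.Icc T₁ c, V t ≤ M := by
      intro t ht
      exact hVanti hT₁mem ⟨ht.1, le_trans ht.2 hc.2⟩ ht.1
    -- G primitive of 1/κ
    set G : ℝ → ℝ := fun v => ∫ u in δ..v, 1 / κ u with hG
    have hinvcont : ContinuousOn (fun u => 1 / κ u) (Set.Icc δ M) := by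
      apply ContinuousOn.div continuousOn_const hκc.continuousOn
      intro u hu; exact (hκpos u (lt_of_lt_of_le hδ0 hu.1)).ne'
    have hGcont : ContinuousOn G (Set.Icc δ M) := by
      have huicc : Set.Icc δ M = Set.uIcc δ M := (Set.uIcc_of_le hδM.le).symm
      rw [huicc, hG]
      apply continuousOn_primitive_interval
      rw [← huicc]
      exact hinvcont.integrableOn_Icc
    set g : ℝ → ℝ := fun t => G (V t) + 3 * t with hg
    have hmaps : Set.MapsTo V (Set.Icc T₁ c) (Set.Icc δ M) :=
      fun t ht => ⟨hVge t ht, hVle t ht⟩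
    have hgcont : ContinuousOn g (Set.Icc T₁ c) := by
      apply ContinuousOn.add
      · exact hGcont.comp (hVcont.mono (Set.Icc_subset_Icc_right hc.2)) hmaps
      · exact (continuous_const.mul continuous_id).continuousOn
    have hgderiv : ∀ t ∈ Set.Ioo T₁ c,
        HasDerivAt g (1 / κ (V t) * (-(3 * κ (W t))) + 3) t := by
      intro t ht
      have htmem : t ∈ Set.Icc T₁ T := ⟨ht.1.le, le_trans ht.2.le hc.2⟩
      have htIoo : t ∈ Set.Ioo T₁ T := ⟨ht.1, lt_of_lt_of_le ht.2 hc.2⟩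
      have hVt : δ ≤ V t := hVge t (Set.Ioo_subset_Icc_self ht)
      have hVtpos : 0 < V t := lt_of_lt_of_le hδ0 hVt
      have hGd : HasDerivAt G (1 / κ (V t)) (V t) := by
        rw [hG]
        apply integral_hasDerivAt_right
        · apply ContinuousOn.intervalIntegrable
          rw [Set.uIcc_of_le hVt]
          exact hinvcont.mono (Set.Icc_subset_Icc_right (hVle t (Set.Ioo_subset_Icc_self ht)))
        · have hinvc : ContinuousAt (fun u => 1 / κ u) (V t) := by
            apply ContinuousAt.div continuousAt_const hκc.continuousAt
            exact (hκpos _ hVtpos).ne'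
          exact (measurable_const.div hκc.measurable).aestronglyMeasurable.stronglyMeasurableAtFilter
        · apply ContinuousAt.div continuousAt_const hκc.continuousAt
          exact (hκpos _ hVtpos).ne'
      have hVd := hVderiv t htIoo
      have hcomp : HasDerivAt (fun t => G (V t)) (1 / κ (V t) * (-(3 * κ (W t)))) t :=
        hGd.comp t hVd
      have hid : HasDerivAt (fun t : ℝ => 3 * t) 3 t := by
        simpa using (hasDerivAt_id t).const_mul 3
      exact hcomp.add hid
    have hgmono : MonotoneOn g (Set.Icc T₁ c) := by
      apply monotoneOn_of_deriv_nonneg (convex_Icc T₁ c) hgcont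
      · intro t ht
        rw [interior_Icc] at ht
        exact ((hgderiv t ht).differentiableAt).differentiableWithinAt
      · intro t ht
        rw [interior_Icc] at ht
        rw [(hgderiv t ht).deriv]
        have htmem : t ∈ Set.Icc T₁ T := ⟨ht.1.le, le_trans ht.2.le hc.2⟩
        have hVt : δ ≤ V t := hVge t (Set.Ioo_subset_Icc_self ht)
        have hVtpos : 0 < κ (V t) := hκpos _ (lt_of_lt_of_le hδ0 hVt)
        have hWVt : κ (W t) ≤ κ (V t) := hκm (hWV t htmem)
        have hWtnn : 0 ≤ κ (W t) := hκWnn t htmem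
        rw [div_mul_eq_mul_div, one_mul, neg_div]
        rw [← sub_nonneg]
        have : (3 * κ (W t)) / κ (V t) ≤ 3 := by
          rw [div_le_iff₀ hVtpos]
          nlinarith
        linarith
    have hkey := hgmono ⟨le_rfl, hcT₁.le⟩ ⟨hcT₁.le, le_rfl⟩ hcT₁.le
    rw [hg] at hkey
    simp only at hkey
    rw [hVc] at hkey
    have hGδ : G δ = 0 := by rw [hG]; simp
    rw [hGδ] at hkey
    have hGM : G (V T₁) ≤ 3 * (c - T₁) := by linarith
    rw [← hMdef] at hGM
    calc (∫ u in δ..M, 1 / κ u) = G M := rfl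
      _ ≤ 3 * (c - T₁) := hGM
      _ ≤ 3 * (T - T₁) := by nlinarith [hc.2]
  -- conclude
  intro t ht
  have h1 : X t ≤ W t := hXW t ht
  have h2 : W t ≤ V t := hWV t ht
  have h3 : V t ≤ V T₁ := hVanti hT₁mem ht ht.1
  have h4 : 0 ≤ X t := hXnn t ht
  linarith [hVT₁ ▸ h3]


section helpers
lemma eventually_of_succ {p : ℕ → Prop} (h : ∀ᶠ n in atTop, p (n+1)) :
    ∀ᶠ n in atTop, p n := by
  rw [eventually_atTop] at h ⊢
  obtain ⟨N, hN⟩ := h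
  refine ⟨N + 1, fun n hn => ?_⟩
  have hpos : 0 < n := by omega
  have hne : n - 1 + 1 = n := Nat.succ_pred_eq_of_pos hpos
  rw [← hne]
  exact hN (n-1) (by omega)

lemma real_le_of_forall_pos_le_add {a b : ℝ} (h : ∀ ε : ℝ, 0 < ε → a ≤ b + ε) : a ≤ b := by
  by_contra hc
  push_neg at hc
  have := h ((a - b) / 2) (by linarith)
  linarith
end helpers

/-- Coupled Bihari iteration: the deterministic skeleton of the passage from
(42) and (46) to the convergence of the Picard iterates in the proof of
Theorem 2 of the paper. -/
theorem stmt_10 (T₁ T : ℝ) (hT : T₁ < T)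
    (κ : ℝ → ℝ) (hκc : Continuous κ) (hκm : Monotone κ) (hκ0 : κ 0 = 0)
    (hκpos : ∀ u : ℝ, 0 < u → 0 < κ u)
    (hdiv : ∀ ε : ℝ, 0 < ε →
      ∫⁻ u in Set.Ioc (0 : ℝ) ε, ENNReal.ofReal (1 / κ u) = ⊤)
    (x y : ℕ → ℝ → ℝ)
    (hxm : ∀ n : ℕ, 1 ≤ n → Measurable (x n))
    (hym : ∀ n : ℕ, 1 ≤ n → Measurable (y n))
    (hxnn : ∀ n : ℕ, 1 ≤ n → ∀ t ∈ Set.Icc T₁ T, 0 ≤ x n t)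
    (hynn : ∀ n : ℕ, 1 ≤ n → ∀ t ∈ Set.Icc T₁ T, 0 ≤ y n t)
    (hxanti : ∀ n : ℕ, 1 ≤ n → AntitoneOn (x n) (Set.Icc T₁ T))
    (hyanti : ∀ n : ℕ, 1 ≤ n → AntitoneOn (y n) (Set.Icc T₁ T))
    (hbdd : ∃ C : ℝ, ∀ n : ℕ, 1 ≤ n → ∀ t ∈ Set.Icc T₁ T, x n t + y n t ≤ C)
    (hrec : ∀ n : ℕ, 2 ≤ n → ∀ t ∈ Set.Icc T₁ T,
      x n t + y n t ≤ 2 * (∫ s in t..T, κ (x n s)) + (1 / 8) * y (n - 1) t) :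
    Filter.Tendsto (fun n : ℕ => ⨆ t : Set.Icc T₁ T, (x n ↑t + y n ↑t))
      Filter.atTop (nhds 0) := by
  have hT₁mem : T₁ ∈ Set.Icc T₁ T := ⟨le_rfl, hT.le⟩
  obtain ⟨C₀, hC₀⟩ := hbdd
  set C := max C₀ 0 with hC
  have hCnn : 0 ≤ C := le_max_right _ _
  have hsum : ∀ n : ℕ, 1 ≤ n → ∀ t ∈ Set.Icc T₁ T, x n t + y n t ≤ C :=
    fun n hn t ht => le_trans (hC₀ n hn t ht) (le_max_left _ _)
  have hxC : ∀ n : ℕ, 1 ≤ n → ∀ t ∈ Set.Icc T₁ T, x n t ≤ C :=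
    fun n hn t ht => by linarith [hsum n hn t ht, hynn n hn t ht]
  have hyC : ∀ n : ℕ, 1 ≤ n → ∀ t ∈ Set.Icc T₁ T, y n t ≤ C :=
    fun n hn t ht => by linarith [hsum n hn t ht, hxnn n hn t ht]
  -- limsups
  set X : ℝ → ℝ := fun t => limsup (fun n => x (n+1) t) atTop with hXdef
  set Y : ℝ → ℝ := fun t => limsup (fun n => y (n+1) t) atTop with hYdef
  have hxbdd : ∀ t ∈ Set.Icc T₁ T, IsBoundedUnder (· ≤ ·) atTop (fun n => x (n+1) t) :=
    fun t ht => isBoundedUnder_of ⟨C, fun n => hxC (n+1) (by omega) t ht⟩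
  have hybdd : ∀ t ∈ Set.Icc T₁ T, IsBoundedUnder (· ≤ ·) atTop (fun n => y (n+1) t) :=
    fun t ht => isBoundedUnder_of ⟨C, fun n => hyC (n+1) (by omega) t ht⟩
  have hxcob : ∀ t ∈ Set.Icc T₁ T, IsCoboundedUnder (· ≤ ·) atTop (fun n => x (n+1) t) :=
    fun t ht => isCoboundedUnder_le_of_le atTop (fun n => hxnn (n+1) (by omega) t ht)
  have hycob : ∀ t ∈ Set.Icc T₁ T, IsCoboundedUnder (· ≤ ·) atTop (fun n => y (n+1) t) :=
    fun t ht => isCoboundedUnder_le_of_le atTop (fun n => hynn (n+1) (by omega) t ht)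
  have hX0 : ∀ t ∈ Set.Icc T₁ T, 0 ≤ X t := fun t ht =>
    le_limsup_of_frequently_le
      (Eventually.frequently (Eventually.of_forall (fun n => hxnn (n+1) (by omega) t ht)))
      (hxbdd t ht)
  have hY0 : ∀ t ∈ Set.Icc T₁ T, 0 ≤ Y t := fun t ht =>
    le_limsup_of_frequently_le
      (Eventually.frequently (Eventually.of_forall (fun n => hynn (n+1) (by omega) t ht)))
      (hybdd t ht)
  have hXC : ∀ t ∈ Set.Icc T₁ T, X t ≤ C := fun t ht =>
    limsup_le_of_le (hxcob t ht) (Eventually.of_forall (fun n => hxC (n+1) (by omega) t ht))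
  have hYC : ∀ t ∈ Set.Icc T₁ T, Y t ≤ C := fun t ht =>
    limsup_le_of_le (hycob t ht) (Eventually.of_forall (fun n => hyC (n+1) (by omega) t ht))
  have hXmeas : Measurable X := Measurable.limsup (fun n => hxm (n+1) (by omega))
  -- eventual bounds from limsup
  have hxev : ∀ t ∈ Set.Icc T₁ T, ∀ ε : ℝ, 0 < ε →
      ∀ᶠ n in atTop, x (n+1) t < X t + ε := by
    intro t ht ε hε
    exact eventually_lt_of_limsup_lt (by rw [hXdef]; simp only; linarith) (hxbdd t ht)
  have hyev : ∀ t ∈ Set.Icc T₁ T, ∀ ε : ℝ, 0 < ε →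
      ∀ᶠ n in atTop, y (n+1) t < Y t + ε := by
    intro t ht ε hε
    exact eventually_lt_of_limsup_lt (by rw [hYdef]; simp only; linarith) (hybdd t ht)
  -- pointwise limsup of ofReal ∘ κ ∘ x
  have hptwise : ∀ s ∈ Set.Icc T₁ T,
      limsup (fun n => ENNReal.ofReal (κ (x (n+1) s))) atTop ≤ ENNReal.ofReal (κ (X s)) := by
    intro s hs
    apply ENNReal.le_of_forall_pos_le_add
    intro ε hε _
    obtain ⟨δ, hδ0, hδ⟩ := Metric.continuous_iff.mp hκc (X s) ε (by exact_mod_cast hε)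
    have hev := hxev s hs (δ/2) (by linarith)
    have : ∀ᶠ n in atTop,
        ENNReal.ofReal (κ (x (n+1) s)) ≤ ENNReal.ofReal (κ (X s)) + ε := by
      filter_upwards [hev] with n hn
      have h1 : κ (x (n+1) s) ≤ κ (X s + δ/2) := hκm hn.le
      have h2 : κ (X s + δ/2) < κ (X s) + ε := by
        have := hδ (X s + δ/2) (by rw [Real.dist_eq]; rw [abs_of_nonneg (by linarith)]; linarith)
        rw [Real.dist_eq, abs_lt] at this
        linarith [this.1, this.2]
      calc ENNReal.ofReal (κ (x (n+1) s)) ≤ ENNReal.ofReal (κ (X s) + ε) :=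
            ENNReal.ofReal_le_ofReal (by linarith)
        _ ≤ ENNReal.ofReal (κ (X s)) + ENNReal.ofReal ε := ENNReal.ofReal_add_le
        _ = ENNReal.ofReal (κ (X s)) + ε := by rw [ENNReal.ofReal_coe_nnreal]
    exact limsup_le_of_le (by isBoundedDefault) this
  -- nonneg of κ composed
  have hκX : ∀ s ∈ Set.Icc T₁ T, 0 ≤ κ (X s) := fun s hs => by
    rw [← hκ0]; exact hκm (hX0 s hs)
  -- B and its basic properties
  set B : ℝ → ℝ := fun t => ∫ s in t..T, κ (X s) with hBdef
  have hXint : ∀ t ∈ Set.Icc T₁ T, IntegrableOn (fun s => κ (X s)) (Set.Ioc t T) volume := by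
    intro t ht
    apply Measure.integrableOn_of_bounded (M := κ C) measure_Ioc_lt_top.ne
      (hκc.measurable.comp hXmeas).aestronglyMeasurable
    filter_upwards [ae_restrict_mem measurableSet_Ioc] with s hs
    have hsmem : s ∈ Set.Icc T₁ T := ⟨le_trans ht.1 hs.1.le, hs.2⟩
    simp only [Function.comp_apply]
    rw [Real.norm_eq_abs, abs_of_nonneg (hκX s hsmem)]
    exact hκm (hXC s hsmem)
  have hB0 : ∀ t ∈ Set.Icc T₁ T, 0 ≤ B t := by
    intro t ht
    rw [hBdef]
    simp only
    rw [integral_of_le ht.2]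
    apply setIntegral_nonneg measurableSet_Ioc
    intro s hs
    exact hκX s ⟨le_trans ht.1 hs.1.le, hs.2⟩
  -- reverse Fatou
  have hFatou : ∀ t ∈ Set.Icc T₁ T, ∀ ε : ℝ, 0 < ε →
      ∀ᶠ n in atTop, (∫ s in t..T, κ (x (n+1) s)) < B t + ε := by
    intro t ht ε hε
    set μ := volume.restrict (Set.Ioc t T) with hμ
    set f : ℕ → ℝ → ENNReal := fun n s => ENNReal.ofReal (κ (x (n+1) s)) with hfdef
    have hfm : ∀ n, Measurable (f n) :=
      fun n => (hκc.measurable.comp (hxm (n+1) (by omega))).ennreal_ofReal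
    have hmem : ∀ᵐ s ∂μ, s ∈ Set.Icc T₁ T := by
      filter_upwards [ae_restrict_mem measurableSet_Ioc] with s hs
      exact ⟨le_trans ht.1 hs.1.le, hs.2⟩
    have hbound : ∀ n, f n ≤ᵐ[μ] fun _ => ENNReal.ofReal (κ C) := by
      intro n
      filter_upwards [hmem] with s hs
      exact ENNReal.ofReal_le_ofReal (hκm (hxC (n+1) (by omega) s hs))
    have hfin : (∫⁻ _ : ℝ, ENNReal.ofReal (κ C) ∂μ) ≠ ⊤ := by
      rw [lintegral_const]
      exact (ENNReal.mul_lt_top ENNReal.ofReal_lt_top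
        (by rw [hμ, Measure.restrict_apply_univ]; exact measure_Ioc_lt_top)).ne
    have hrf := limsup_lintegral_le (μ := μ) _ hfm hbound hfin
    have hstep2 : (∫⁻ s, limsup (fun n => f n s) atTop ∂μ) ≤ ∫⁻ s, ENNReal.ofReal (κ (X s)) ∂μ := by
      apply lintegral_mono_ae
      filter_upwards [hmem] with s hs
      exact hptwise s hs
    -- identify lintegrals with ofReal of integrals
    have hxint : ∀ n : ℕ, IntegrableOn (fun s => κ (x (n+1) s)) (Set.Ioc t T) volume := by
      intro n
      apply Measure.integrableOn_of_bounded (M := κ C) measure_Ioc_lt_top.ne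
        (hκc.measurable.comp (hxm (n+1) (by omega))).aestronglyMeasurable
      filter_upwards [ae_restrict_mem measurableSet_Ioc] with s hs
      have hsmem : s ∈ Set.Icc T₁ T := ⟨le_trans ht.1 hs.1.le, hs.2⟩
      simp only [Function.comp_apply]
      rw [Real.norm_eq_abs, abs_of_nonneg (by rw [← hκ0]; exact hκm (hxnn (n+1) (by omega) s hsmem))]
      exact hκm (hxC (n+1) (by omega) s hsmem)
    have hofr : ∀ n : ℕ, ENNReal.ofReal (∫ s in t..T, κ (x (n+1) s)) = ∫⁻ s, f n s ∂μ := by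
      intro n
      rw [integral_of_le ht.2]
      apply ofReal_integral_eq_lintegral_ofReal (hxint n)
      filter_upwards [hmem] with s hs
      simp only [Pi.zero_apply]
      rw [← hκ0]; exact hκm (hxnn (n+1) (by omega) s hs)
    have hofrB : ENNReal.ofReal (B t) = ∫⁻ s, ENNReal.ofReal (κ (X s)) ∂μ := by
      rw [hBdef]
      simp only
      rw [integral_of_le ht.2]
      apply ofReal_integral_eq_lintegral_ofReal (hXint t ht)
      filter_upwards [hmem] with s hs
      simp only [Pi.zero_apply]
      exact hκX s hs
    have hkey : limsup (fun n => ENNReal.ofReal (∫ s in t..T, κ (x (n+1) s))) atTop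
        ≤ ENNReal.ofReal (B t) := by
      rw [hofrB]
      calc limsup (fun n => ENNReal.ofReal (∫ s in t..T, κ (x (n+1) s))) atTop
          = limsup (fun n => ∫⁻ s, f n s ∂μ) atTop := by
            congr 1; funext n; exact hofr n
        _ ≤ _ := le_trans hrf hstep2
    have hlt : limsup (fun n => ENNReal.ofReal (∫ s in t..T, κ (x (n+1) s))) atTop
        < ENNReal.ofReal (B t + ε) := by
      apply lt_of_le_of_lt hkey
      rw [ENNReal.ofReal_lt_ofReal_iff (by linarith [hB0 t ht])]
      linarith
    have hev := eventually_lt_of_limsup_lt hlt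
    filter_upwards [hev] with n hn
    have hnn : 0 ≤ ∫ s in t..T, κ (x (n+1) s) := by
      rw [integral_of_le ht.2]
      apply setIntegral_nonneg measurableSet_Ioc
      intro s hs
      have hsmem : s ∈ Set.Icc T₁ T := ⟨le_trans ht.1 hs.1.le, hs.2⟩
      rw [← hκ0]; exact hκm (hxnn (n+1) (by omega) s hsmem)
    rw [ENNReal.ofReal_lt_ofReal_iff_of_nonneg hnn] at hn
    exact hn
  -- key estimates: X t, Y t ≤ 2 B t + (1/8) Y t (+ 3 ε)
  have hkeyXY : ∀ t ∈ Set.Icc T₁ T,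
      X t ≤ 2 * B t + (1/8) * Y t ∧ Y t ≤ 2 * B t + (1/8) * Y t := by
    intro t ht
    have hmain : ∀ ε : ℝ, 0 < ε →
        (X t ≤ 2 * B t + (1/8) * Y t + 3 * ε ∧ Y t ≤ 2 * B t + (1/8) * Y t + 3 * ε) := by
      intro ε hε
      have hy' : ∀ᶠ n in atTop, y n t < Y t + ε :=
        eventually_of_succ (hyev t ht ε hε)
      have hI := hFatou t ht ε hε
      have hcomb : ∀ᶠ n in atTop,
          x (n+1) t + y (n+1) t ≤ 2 * B t + (1/8) * Y t + 3 * ε := by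
        have hn1 : ∀ᶠ n : ℕ in atTop, 1 ≤ n := eventually_ge_atTop 1
        filter_upwards [hy', hI, hn1] with n hy1 hI1 hn1
        have hrecn := hrec (n+1) (by omega) t ht
        have hyidx : (n+1) - 1 = n := by omega
        rw [hyidx] at hrecn
        have hynn' : 0 ≤ y n t := hynn n hn1 t ht
        have hY0' : 0 ≤ Y t := hY0 t ht
        nlinarith [hy1, hI1]
      constructor
      · apply limsup_le_of_le (hxcob t ht)
        filter_upwards [hcomb] with n hn
        have := hynn (n+1) (by omega) t ht
        linarith
      · apply limsup_le_of_le (hycob t ht)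
        filter_upwards [hcomb] with n hn
        have := hxnn (n+1) (by omega) t ht
        linarith
    constructor
    · apply real_le_of_forall_pos_le_add
      intro ε hε
      have := (hmain (ε/3) (by linarith)).1
      linarith
    · apply real_le_of_forall_pos_le_add
      intro ε hε
      have := (hmain (ε/3) (by linarith)).2
      linarith
  have hYB : ∀ t ∈ Set.Icc T₁ T, Y t ≤ (16/7) * B t := by
    intro t ht
    have := (hkeyXY t ht).2
    linarith
  have hXB : ∀ t ∈ Set.Icc T₁ T, X t ≤ 3 * B t := by
    intro t ht
    have h1 := (hkeyXY t ht).1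
    have h2 := hYB t ht
    have h3 := hB0 t ht
    linarith
  -- Osgood: X ≡ 0 on Icc
  have hXzero : ∀ t ∈ Set.Icc T₁ T, X t = 0 :=
    osgood T₁ T hT κ hκc hκm hκ0 hκpos hdiv C X hXmeas hX0 hXC hXB
  -- B T₁ = 0 and Y T₁ = 0
  have hBT₁ : B T₁ = 0 := by
    rw [hBdef]
    simp only
    rw [integral_of_le hT.le]
    rw [setIntegral_congr_fun measurableSet_Ioc (g := fun _ => (0:ℝ))
      (fun s hs => by rw [hXzero s ⟨hs.1.le, hs.2⟩, hκ0])]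
    simp
  have hYT₁ : Y T₁ = 0 :=
    le_antisymm (by have := hYB T₁ hT₁mem; rw [hBT₁] at this; linarith) (hY0 T₁ hT₁mem)
  -- final convergence
  haveI : Nonempty (Set.Icc T₁ T) := Set.nonempty_Icc.2 hT.le |>.to_subtype
  have hsup_eq : ∀ n : ℕ, 1 ≤ n →
      (⨆ t : Set.Icc T₁ T, (x n ↑t + y n ↑t)) = x n T₁ + y n T₁ := by
    intro n hn
    apply le_antisymm
    · apply ciSup_le
      intro t
      have h1 := hxanti n hn hT₁mem t.2 t.2.1
      have h2 := hyanti n hn hT₁mem t.2 t.2.1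
      exact add_le_add h1 h2
    · apply le_ciSup (f := fun t : Set.Icc T₁ T => x n ↑t + y n ↑t)
        ⟨x n T₁ + y n T₁, by
          rintro v ⟨t, rfl⟩
          have h1 := hxanti n hn hT₁mem t.2 t.2.1
          have h2 := hyanti n hn hT₁mem t.2 t.2.1
          exact add_le_add h1 h2⟩ (⟨T₁, hT₁mem⟩ : Set.Icc T₁ T)
  rw [tendsto_order]
  constructor
  · intro a ha
    filter_upwards [eventually_ge_atTop 1] with n hn
    rw [hsup_eq n hn]
    have h1 := hxnn n hn T₁ hT₁mem
    have h2 := hynn n hn T₁ hT₁mem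
    linarith
  · intro a ha
    set ε := a / 4 with hεdef
    have hε : 0 < ε := by rw [hεdef]; linarith
    have hI := hFatou T₁ hT₁mem ε hε
    have hy' : ∀ᶠ n in atTop, y n T₁ < Y T₁ + ε := eventually_of_succ (hyev T₁ hT₁mem ε hε)
    have hcomb : ∀ᶠ n in atTop,
        x (n+1) T₁ + y (n+1) T₁ < a := by
      filter_upwards [hy', hI, eventually_ge_atTop 1] with n hy1 hI1 hn1
      have hrecn := hrec (n+1) (by omega) T₁ hT₁mem
      have hyidx : (n+1) - 1 = n := by omega
      rw [hyidx] at hrecn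
      rw [hBT₁] at hI1
      rw [hYT₁] at hy1
      have hynn' : 0 ≤ y n T₁ := hynn n hn1 T₁ hT₁mem
      calc x (n+1) T₁ + y (n+1) T₁ ≤ 2 * (∫ s in T₁..T, κ (x (n+1) s)) + (1/8) * y n T₁ := hrecn
        _ < 2 * (0 + ε) + (1/8) * (0 + ε) := by nlinarith
        _ < a := by rw [hεdef]; linarith
    have := eventually_of_succ (p := fun n => x n T₁ + y n T₁ < a) hcomb
    filter_upwards [this, eventually_ge_atTop 1] with n hn hn1
    rw [hsup_eq n hn1]
    exact hn
end
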